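/- Running lemma for RI (Lemma 2): let π be a program satisfying removal of inputs with π(I) ⇓ O. In the enforcement mechanism for removal of inputs, regardless of the order in which the local executions are scheduled, if the low execution consumes the same low input items as in I and the high execution consumes the high and low input items as in I, then the execution of the enforcement mechanism terminates, and the input queue I* it consumes satisfies I*|_c = I|_c for every input channel c. -/

import Mathlib

namespace MapReduce

/-- Security levels: high (`H`) and low (`L`). -/
inductive SecLevel
  | H | L
deriving DecidableEq

/-- Channels (input/output channels, identified by names). -/
abbrev Chan := String

/-- Values: booleans and non-negative integers. -/
inductive Val
  | bool (b : Bool)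
  | nat (n : ℕ)
deriving DecidableEq

/-- An input/output vector, defined (≠ ⊥) on exactly one channel. -/
structure Vec where
  ch : Chan
  val : Val
deriving DecidableEq

/-- Queues of vectors. -/
abbrev Queue := List Vec

/-- `Q|_c`: the subsequence of vectors of `Q` defined on channel `c`. -/
def restrictC (Q : Queue) (c : Chan) : Queue :=
  Q.filter (fun v => decide (v.ch = c))

/-- `Q|_l`: the subsequence of vectors of `Q` defined on a channel of level `l`. -/
def restrictL (lvl : Chan → SecLevel) (Q : Queue) (l : SecLevel) : Queue :=
  Q.filter (fun v => decide (lvl v.ch = l))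

/-- Low equality `Q =_L Q'`. -/
def lowEq (lvl : Chan → SecLevel) (Q Q' : Queue) : Prop :=
  restrictL lvl Q SecLevel.L = restrictL lvl Q' SecLevel.L

/-- `dequeue Q c`: the value of the first vector of `Q` defined on channel `c`,
together with the queue obtained by removing that vector (or `none`). -/
def dequeue : Queue → Chan → Option (Val × Queue)
  | [], _ => none
  | v :: Q, c =>
    if v.ch = c then some (v.val, Q)
    else (dequeue Q c).map (fun p => (p.1, v :: p.2))

abbrev Var := String

inductive Expr
  | var (x : Var)
  | const (v : Val)
deriving DecidableEq

abbrev Mem := Var → Val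

def Expr.eval (m : Mem) : Expr → Val
  | .var x => m x
  | .const v => v

/-- The initial memory, mapping every variable to the initial value. -/
def Mem.init : Mem := fun _ => Val.nat 0

/-- The while-language of controlled programs. -/
inductive Prog
  | assign (x : Var) (e : Expr)
  | seq (p q : Prog)
  | ite (e : Expr) (p q : Prog)
  | while (e : Expr) (p : Prog)
  | skip
  | input (x : Var) (c : Chan)
  | output (e : Expr) (c : Chan)
deriving DecidableEq

/-- Configurations of controlled programs. -/
structure PConf where
  prg : Prog
  mem : Mem
  inq : Queue
  outq : Queue

/-- Small-step semantics of controlled programs. -/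
inductive PStep : PConf → PConf → Prop
  | assign : PStep ⟨.assign x e, m, I, O⟩ ⟨.skip, Function.update m x (e.eval m), I, O⟩
  | seqStep : PStep ⟨p, m, I, O⟩ ⟨p', m', I', O'⟩ →
      PStep ⟨.seq p q, m, I, O⟩ ⟨.seq p' q, m', I', O'⟩
  | seqSkip : PStep ⟨.seq .skip q, m, I, O⟩ ⟨q, m, I, O⟩
  | iteT : e.eval m = .bool true → PStep ⟨.ite e p q, m, I, O⟩ ⟨p, m, I, O⟩
  | iteF : e.eval m = .bool false → PStep ⟨.ite e p q, m, I, O⟩ ⟨q, m, I, O⟩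
  | whileT : e.eval m = .bool true →
      PStep ⟨.while e p, m, I, O⟩ ⟨.seq p (.while e p), m, I, O⟩
  | whileF : e.eval m = .bool false → PStep ⟨.while e p, m, I, O⟩ ⟨.skip, m, I, O⟩
  | inp : dequeue I c = some (v, I') →
      PStep ⟨.input x c, m, I, O⟩ ⟨.skip, Function.update m x v, I', O⟩
  | out : PStep ⟨.output e c, m, I, O⟩ ⟨.skip, m, I, O ++ [⟨c, e.eval m⟩]⟩

/-- `π(I) ⇓ O`: the program terminates with the input queue completely consumed
and output queue `O`. -/
def BigStep (p : Prog) (I O : Queue) : Prop :=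
  ∃ m, Relation.ReflTransGen PStep ⟨p, Mem.init, I, []⟩ ⟨.skip, m, [], O⟩

/-- Termination-insensitive non-interference. -/
def TINI (lvl : Chan → SecLevel) (p : Prog) : Prop :=
  ∀ I I' O O', lowEq lvl I I' → BigStep p I O → BigStep p I' O' → lowEq lvl O O'

/-- Termination-sensitive non-interference. -/
def TSNI (lvl : Chan → SecLevel) (p : Prog) : Prop :=
  ∀ I I' O, lowEq lvl I I' → BigStep p I O →
    ∃ O', BigStep p I' O' ∧ lowEq lvl O' O

/-- Removal of inputs, at a fixed choice of the default value. -/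
def RIat (lvl : Chan → SecLevel) (vdef : Val) (p : Prog) : Prop :=
  ∀ I O, BigStep p I O →
    ∃ I' O', lowEq lvl I' I ∧
      (∀ v ∈ I', lvl v.ch = SecLevel.H → v.val = vdef) ∧
      (∀ c, (restrictC I' c).length ≤ (restrictC I c).length) ∧
      BigStep p I' O' ∧ lowEq lvl O' O

/-- Removal of inputs (for every choice of the default value). -/
def RI (lvl : Chan → SecLevel) (p : Prog) : Prop := ∀ vdef, RIat lvl vdef p

/-- Deletion of inputs, at a fixed choice of the default value. -/
def DIat (lvl : Chan → SecLevel) (vdef : Val) (p : Prog) : Prop :=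
  ∀ (I1 : Queue) (v : Vec) (I2 : Queue) (O : Queue), lvl v.ch = SecLevel.H →
    (∀ w ∈ I2, lvl w.ch = SecLevel.H → w.val = vdef) →
    BigStep p (I1 ++ v :: I2) O →
    ∃ I1' I2' O', lowEq lvl (I1' ++ I2') (I1 ++ v :: I2) ∧
      (∀ w ∈ I2', lvl w.ch = SecLevel.H → w.val = vdef) ∧
      BigStep p (I1' ++ I2') O' ∧ lowEq lvl O' O

/-- Deletion of inputs (for every choice of the default value). -/
def DI (lvl : Chan → SecLevel) (p : Prog) : Prop := ∀ vdef, DIat lvl vdef p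

/-! ### The enforcement mechanism -/

/-- Interrupt signals: input request or output request on a channel. -/
inductive Sig
  | inSig (c : Chan)
  | outSig (c : Chan)
deriving DecidableEq

/-- States of a local execution: executing or sleeping. -/
inductive LState
  | E | S
deriving DecidableEq

/-- Configuration of a local execution (with instrumentation recording the
items it has received from MAP and the items it has consumed). -/
structure LocalConf where
  stt : LState
  intr : Option Sig
  prg : Prog
  mem : Mem
  inq : Queue
  outq : Queue
  /-- instrumentation: items delivered by MAP to this local input queue, in order -/
  received : Queue
  /-- instrumentation: items consumed from the local input queue, in order -/
  consumed : Queue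

instance : Inhabited LocalConf :=
  ⟨⟨.E, none, .skip, Mem.init, [], [], [], []⟩⟩

def LocalConf.init (p : Prog) : LocalConf :=
  ⟨.E, none, p, Mem.init, [], [], [], []⟩

/-- Semantics of local executions (rules LINP1, LINP2, LOUTP and the standard
rules, executed only in state `E` with no pending signal). -/
inductive LStep : LocalConf → LocalConf → Prop
  | assign : LStep ⟨.E, none, .assign x e, m, I, O, r, cs⟩
      ⟨.E, none, .skip, Function.update m x (e.eval m), I, O, r, cs⟩
  | seqStep : LStep ⟨.E, none, p, m, I, O, r, cs⟩ ⟨st, sg, p', m', I', O', r', cs'⟩ →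
      LStep ⟨.E, none, .seq p q, m, I, O, r, cs⟩ ⟨st, sg, .seq p' q, m', I', O', r', cs'⟩
  | seqSkip : LStep ⟨.E, none, .seq .skip q, m, I, O, r, cs⟩ ⟨.E, none, q, m, I, O, r, cs⟩
  | iteT : e.eval m = .bool true →
      LStep ⟨.E, none, .ite e p q, m, I, O, r, cs⟩ ⟨.E, none, p, m, I, O, r, cs⟩
  | iteF : e.eval m = .bool false →
      LStep ⟨.E, none, .ite e p q, m, I, O, r, cs⟩ ⟨.E, none, q, m, I, O, r, cs⟩
  | whileT : e.eval m = .bool true →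
      LStep ⟨.E, none, .while e p, m, I, O, r, cs⟩
        ⟨.E, none, .seq p (.while e p), m, I, O, r, cs⟩
  | whileF : e.eval m = .bool false →
      LStep ⟨.E, none, .while e p, m, I, O, r, cs⟩ ⟨.E, none, .skip, m, I, O, r, cs⟩
  | inp1 : dequeue I c = some (v, I') →
      LStep ⟨.E, none, .input x c, m, I, O, r, cs⟩
        ⟨.E, none, .skip, Function.update m x v, I', O, r, cs ++ [⟨c, v⟩]⟩
  | inp2 : dequeue I c = none →
      LStep ⟨.E, none, .input x c, m, I, O, r, cs⟩
        ⟨.S, some (.inSig c), .input x c, m, I, O, r, cs⟩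
  | out : LStep ⟨.E, none, .output e c, m, I, O, r, cs⟩
      ⟨.S, some (.outSig c), .skip, m, I, O ++ [⟨c, e.eval m⟩], r, cs⟩

/-- The three enforcement mechanisms. -/
inductive Mech
  | NI | RI | DI
deriving DecidableEq

/-- Ask privilege of execution `i` on input channel `c`: MAP performs an actual
read of the global input queue for the request `(i, c)`. -/
def canAsk : Mech → (Chan → SecLevel) → ℕ → Chan → Prop
  | .NI, lvl, i, c => (i = 0 ∧ lvl c = .H) ∨ (i = 1 ∧ lvl c = .L)
  | .RI, lvl, i, c => i = 1 ∨ (i = 0 ∧ lvl c = .H)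
  | .DI, lvl, i, c => (i = 0 ∧ lvl c = .H) ∨ (i = 1 ∧ lvl c = .L)

/-- Requests answered by MAP with the default value, without consuming global input. -/
def defaultAnswer : Mech → (Chan → SecLevel) → ℕ → Chan → Prop
  | .NI, lvl, i, c => i = 1 ∧ lvl c = .H
  | .RI, _, _, _ => False
  | .DI, lvl, i, c => 1 ≤ i ∧ lvl c = .H

/-- Requests on which MAP only removes the signal (the requester keeps
sleeping, waiting for the item to be read on behalf of another execution). -/
def skipAnswer : Mech → (Chan → SecLevel) → ℕ → Chan → Prop
  | .NI, lvl, i, c => i = 0 ∧ lvl c = .L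
  | .RI, lvl, i, c => i = 0 ∧ lvl c = .L
  | .DI, lvl, i, c => i ≠ 1 ∧ lvl c = .L

/-- The channel of the first instruction to be executed, if it is an input. -/
def Prog.headInput : Prog → Option (Var × Chan)
  | .input x c => some (x, c)
  | .seq p _ => p.headInput
  | _ => none

/-- Send a vector to the local input queue of a local execution. -/
def sendTo (l : LocalConf) (v : Vec) : LocalConf :=
  { l with inq := l.inq ++ [v], received := l.received ++ [v] }

/-- The channel the local execution is sleeping on (waiting for an input). -/
def LocalConf.waitChanI (l : LocalConf) : Option Chan :=
  if l.stt = LState.S then l.prg.headInput.map Prod.snd else none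

/-- `isReady(c)`: the execution sleeps waiting for an input on `c` and the item is present. -/
def readyOn (l : LocalConf) (c : Chan) : Prop :=
  l.waitChanI = some c ∧ (dequeue l.inq c).isSome = true

instance (l : LocalConf) (c : Chan) : Decidable (readyOn l c) := by
  unfold readyOn; infer_instance

/-- `wake(isReady(c))` applied to a single local execution. -/
def wakeReadyOn (c : Chan) (l : LocalConf) : LocalConf :=
  if readyOn l c then { l with stt := .E, intr := none } else l

/-- `wake(identical(i))` applied to the requester itself. -/
def wakeNow (l : LocalConf) : LocalConf := { l with stt := .E, intr := none }

/-- Distribution of a value read on channel `c`: the high execution (index 0)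
always receives the real value; other executions receive the real value on low
channels and the default value on high channels (the `tell` privilege); then all
executions whose requested input is ready on `c` are woken. -/
def broadcast (lvl : Chan → SecLevel) (vdef : Val) (c : Chan) (v : Val)
    (locs : List LocalConf) : List LocalConf :=
  (locs.mapIdx (fun j l =>
      sendTo l ⟨c, if j = 0 ∨ lvl c = SecLevel.L then v else vdef⟩)).map (wakeReadyOn c)

/-- In the DI mechanism, a high-channel request of the high execution first
clones the configuration of the high execution onto the stack (state `S`). -/
def preClone (M : Mech) (lvl : Chan → SecLevel) (i : ℕ) (c : Chan)
    (locs : List LocalConf) : List LocalConf :=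
  if M = Mech.DI ∧ i = 0 ∧ lvl c = SecLevel.H then
    locs ++ [{ locs.headI with stt := LState.S, intr := none }]
  else locs

/-- Agents performing steps of the enforcement mechanism: a local execution,
MAP activated on an input request, or REDUCE activated on an output request. -/
inductive Agent
  | loc (i : ℕ)
  | mapA (i : ℕ) (c : Chan)
  | redA (i : ℕ) (c : Chan)
deriving DecidableEq

/-- Configuration of the enforcement mechanism (stack of local executions,
global input and output queues, plus instrumentation recording the items
consumed from the global input queue, in order). -/
structure EMConf where
  locs : List LocalConf
  gin : Queue
  gout : Queue
  /-- instrumentation: items consumed from the global input queue, in order -/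
  gconsumed : Queue

def EMConf.locAt (γ : EMConf) (i : ℕ) : LocalConf := γ.locs.getD i default

/-- Semantics of the enforcement mechanism, as the interleaving of atomic steps
of the local executions, of MAP, and of REDUCE.  MAP is activated on an input
interrupt signal; depending on the mechanism and the privilege tables it reads
the global input queue and broadcasts (rule `mapRead`, with cloning for DI),
answers with the default value (rule `mapDefault`), or does nothing beyond
removing the signal (rule `mapSkip`).  REDUCE is activated on an output
interrupt signal; it forwards to the global output queue exactly the high
outputs of the high execution (index 0) and the low outputs of the low
execution (index 1), cleans the local output queue and wakes the requester. -/
inductive EMStep (M : Mech) (lvl : Chan → SecLevel) (vdef : Val) :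
    Agent → EMConf → EMConf → Prop
  | locStep {γ : EMConf} {i : ℕ} {l l' : LocalConf} :
      γ.locs[i]? = some l → LStep l l' →
      EMStep M lvl vdef (.loc i) γ { γ with locs := γ.locs.set i l' }
  | mapRead {γ : EMConf} {i : ℕ} {c : Chan} {l : LocalConf} {v : Val} {gin' : Queue} :
      γ.locs[i]? = some l → l.stt = .S → l.intr = some (.inSig c) →
      canAsk M lvl i c →
      dequeue γ.gin c = some (v, gin') →
      EMStep M lvl vdef (.mapA i c) γ
        { locs := broadcast lvl vdef c v
            (preClone M lvl i c (γ.locs.set i { l with intr := none })),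
          gin := gin', gout := γ.gout, gconsumed := γ.gconsumed ++ [⟨c, v⟩] }
  | mapDefault {γ : EMConf} {i : ℕ} {c : Chan} {l : LocalConf} :
      γ.locs[i]? = some l → l.stt = .S → l.intr = some (.inSig c) →
      defaultAnswer M lvl i c →
      EMStep M lvl vdef (.mapA i c) γ
        { γ with locs := γ.locs.set i (wakeNow (sendTo { l with intr := none } ⟨c, vdef⟩)) }
  | mapSkip {γ : EMConf} {i : ℕ} {c : Chan} {l : LocalConf} :
      γ.locs[i]? = some l → l.stt = .S → l.intr = some (.inSig c) →
      skipAnswer M lvl i c →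
      EMStep M lvl vdef (.mapA i c) γ
        { γ with locs := γ.locs.set i { l with intr := none } }
  | red {γ : EMConf} {i : ℕ} {c : Chan} {l : LocalConf} {v : Val} {out' : Queue} :
      γ.locs[i]? = some l → l.stt = .S → l.intr = some (.outSig c) →
      dequeue l.outq c = some (v, out') →
      EMStep M lvl vdef (.redA i c) γ
        { γ with
          locs := γ.locs.set i { l with stt := .E, intr := none, outq := out' },
          gout := γ.gout ++
            (if (i = 0 ∧ lvl c = SecLevel.H) ∨ (i = 1 ∧ lvl c = SecLevel.L)
             then [⟨c, v⟩] else []) }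

/-- A step of the enforcement mechanism, by any agent. -/
def EMStepRel (M : Mech) (lvl : Chan → SecLevel) (vdef : Val) :
    EMConf → EMConf → Prop :=
  fun γ γ' => ∃ a, EMStep M lvl vdef a γ γ'

/-- Initial configuration: the high execution π[0] and the low execution π[1],
global input queue `I`, empty global output queue. -/
def EMConf.init (p : Prog) (I : Queue) : EMConf :=
  ⟨[LocalConf.init p, LocalConf.init p], I, [], []⟩

/-- The enforcement mechanism has terminated: all local executions (as well as
the MAP and REDUCE programs, which are collapsed into atomic steps here) are
terminated and the global input queue has been consumed completely. -/
def EMConf.Terminal (γ : EMConf) : Prop :=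
  (∀ l ∈ γ.locs, l.prg = Prog.skip) ∧ γ.gin = []

/-- `EM(π)(I) ⇓ O`. -/
def EMBigStep (M : Mech) (lvl : Chan → SecLevel) (vdef : Val)
    (p : Prog) (I O : Queue) : Prop :=
  ∃ γ, Relation.ReflTransGen (EMStepRel M lvl vdef) (EMConf.init p I) γ ∧
    γ.Terminal ∧ γ.gout = O

/-- Reachable configurations of `EM(π)` on global input `I`. -/
def EMReach (M : Mech) (lvl : Chan → SecLevel) (vdef : Val)
    (p : Prog) (I : Queue) (γ : EMConf) : Prop :=
  Relation.ReflTransGen (EMStepRel M lvl vdef) (EMConf.init p I) γ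

/-- A configuration from which no step is possible. -/
def EMStuck (M : Mech) (lvl : Chan → SecLevel) (vdef : Val) (γ : EMConf) : Prop :=
  ∀ a γ', ¬ EMStep M lvl vdef a γ γ'

/-- There is no infinite run of the enforcement mechanism from `γ0`
(termination under every scheduling of the local executions). -/
def NoInfiniteRun (M : Mech) (lvl : Chan → SecLevel) (vdef : Val) (γ0 : EMConf) : Prop :=
  ¬ ∃ f : ℕ → EMConf, f 0 = γ0 ∧ ∀ n, EMStepRel M lvl vdef (f n) (f (n + 1))

end MapReduce

namespace MapReduce

/-- The consumption hypothesis of the running lemmas: the low execution π[1]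
has consumed the same low input items as in I, and the high execution π[0]
has consumed the high input and low input items as in I. -/
def ConsumesAsIn (lvl : Chan → SecLevel) (I : Queue) (γ : EMConf) : Prop :=
  restrictL lvl (γ.locAt 1).consumed SecLevel.L = restrictL lvl I SecLevel.L ∧
  restrictL lvl (γ.locAt 0).consumed SecLevel.L = restrictL lvl I SecLevel.L ∧
  restrictL lvl (γ.locAt 0).consumed SecLevel.H = restrictL lvl I SecLevel.H


/-!
MAP hands the high execution every item it reads, and the low execution the same items with the
values on high channels replaced by the default. Once the consumption hypothesis holds, MAP has
read exactly `I` channel-wise, so the high execution is a run of π on `I`, and the low execution a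
run of π on a channel-wise extension of the queue `I'` that removal of inputs provides for `I`.
A run on a queue can be replayed on any channel-wise extension of it, and runs are deterministic;
since π(I) and π(I') terminate, both executions are on their way to `skip`. From then on every
step of the mechanism either advances one execution or lowers the weight of its scheduling state,
which rules out infinite runs. In a stuck configuration both executions are at `skip`: one that
could still move would be running, or waiting for REDUCE, or asleep on an input that is in fact
already in its queue.
-/

end MapReduce

lemma Relation.ReflTransGen.of_rightUnique_of_stuck {α : Type*} {r : α → α → Prop}
    (hr : Relator.RightUnique r) {a b z : α} (hz : ∀ t, ¬ r z t)
    (hab : Relation.ReflTransGen r a b) (haz : Relation.ReflTransGen r a z) :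
    Relation.ReflTransGen r b z := by
  rcases hab.total_of_right_unique hr haz with hbz | hzb
  · exact hbz
  · rcases hzb.cases_head with rfl | ⟨t, hzt, -⟩
    exacts [.refl, (hz t hzt).elim]

lemma Relation.ReflTransGen.acc_flip_of_rightUnique {α : Type*} {r : α → α → Prop}
    (hr : Relator.RightUnique r) {a z : α} (hz : ∀ t, ¬ r z t)
    (h : Relation.ReflTransGen r a z) : Acc (flip r) a := by
  induction h using Relation.ReflTransGen.head_induction_on with
  | refl => exact ⟨z, fun t hzt => (hz t hzt).elim⟩
  | head hac _ ih => exact ⟨_, fun t hat => hr hac hat ▸ ih⟩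

lemma Acc.not_exists_descending {α : Type*} {r : α → α → Prop} {a : α} (h : Acc r a) :
    ¬ ∃ f : ℕ → α, f 0 = a ∧ ∀ n, r (f (n + 1)) (f n) := by
  induction h with
  | intro a _ ih =>
    rintro ⟨f, rfl, hf⟩
    exact ih (f 1) (hf 0) ⟨fun n => f (n + 1), rfl, fun n => hf (n + 1)⟩

lemma List.eq_of_getElem?_pair {α : Type*} {a b x : α} {i : ℕ} (h : [a, b][i]? = some x) :
    i = 0 ∧ x = a ∨ i = 1 ∧ x = b := by
  match i with
  | 0 | 1 => simp_all [eq_comm]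

namespace MapReduce

@[simp] lemma restrictC_nil (c : Chan) : restrictC [] c = [] := rfl

@[simp] lemma restrictC_cons (v : Vec) (Q : Queue) (c : Chan) :
    restrictC (v :: Q) c = if v.ch = c then v :: restrictC Q c else restrictC Q c := by
  by_cases h : v.ch = c <;> simp [restrictC, h]

@[simp] lemma restrictC_append (A B : Queue) (c : Chan) :
    restrictC (A ++ B) c = restrictC A c ++ restrictC B c :=
  List.filter_append ..

lemma eq_nil_of_forall_restrictC_eq_nil {Q : Queue} (h : ∀ c, restrictC Q c = []) : Q = [] := by
  cases Q with
  | nil => rfl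
  | cons v Q => simpa using h v.ch

lemma restrictC_eq_of_restrictL_eq {lvl : Chan → SecLevel} {A B : Queue} {s : SecLevel}
    (h : restrictL lvl A s = restrictL lvl B s) {c : Chan} (hc : lvl c = s) :
    restrictC A c = restrictC B c := by
  have key : ∀ Q, restrictC (restrictL lvl Q s) c = restrictC Q c := fun Q => by
    simp only [restrictC, restrictL, List.filter_filter]
    congr 1
    funext v
    by_cases hv : v.ch = c <;> simp [hv, hc]
  rw [← key A, h, key B]

lemma dequeue_eq_none_iff {Q : Queue} {c : Chan} : dequeue Q c = none ↔ restrictC Q c = [] := by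
  induction Q with
  | nil => simp [dequeue]
  | cons v Q ih => by_cases h : v.ch = c <;> simp [dequeue, h, ih]

lemma restrictC_of_dequeue_eq_some {Q Q' : Queue} {c : Chan} {v : Val}
    (h : dequeue Q c = some (v, Q')) (c' : Chan) :
    restrictC Q c' = restrictC (⟨c, v⟩ :: Q') c' := by
  induction Q generalizing Q' with
  | nil => cases h
  | cons w Q ih =>
    by_cases hw : w.ch = c
    · simp only [dequeue, hw, if_true, Option.some.injEq, Prod.mk.injEq] at h
      obtain ⟨rfl, rfl⟩ := h
      cases w; cases hw; rfl
    · simp only [dequeue, hw, if_false, Option.map_eq_some_iff, Prod.mk.injEq] at h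
      obtain ⟨⟨v', Q''⟩, hQ, rfl, rfl⟩ := h
      by_cases hw' : w.ch = c' <;> by_cases hc : c = c' <;> simp_all

lemma dequeue_append_of_eq_some {Q Q' : Queue} {c : Chan} {v : Val}
    (h : dequeue Q c = some (v, Q')) (F : Queue) : dequeue (Q ++ F) c = some (v, Q' ++ F) := by
  induction Q generalizing Q' with
  | nil => cases h
  | cons w Q ih =>
    by_cases hw : w.ch = c
    · simp_all [dequeue]
    · simp only [dequeue, hw, if_false, Option.map_eq_some_iff, Prod.mk.injEq] at h
      obtain ⟨⟨v', Q''⟩, hQ, rfl, rfl⟩ := h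
      simp [dequeue, hw, ih hQ]

lemma dequeue_append_singleton_isSome (Q : Queue) (c : Chan) (v : Val) :
    (dequeue (Q ++ [⟨c, v⟩]) c).isSome := by
  rw [Option.isSome_iff_ne_none, Ne, dequeue_eq_none_iff]
  simp

def ChanPrefix (J K : Queue) : Prop := ∀ c, restrictC J c <+: restrictC K c

lemma ChanPrefix.exists_dequeue {J K J' : Queue} {c : Chan} {v : Val} (hJK : ChanPrefix J K)
    (h : dequeue J c = some (v, J')) : ∃ K', dequeue K c = some (v, K') ∧ ChanPrefix J' K' := by
  obtain ⟨⟨w, K'⟩, hK⟩ : ∃ r, dequeue K c = some r := by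
    refine Option.ne_none_iff_exists'.mp fun hK => ?_
    have := hJK c
    rw [restrictC_of_dequeue_eq_some h, dequeue_eq_none_iff.mp hK] at this
    simp at this
  have hpre : ∀ c', restrictC (⟨c, v⟩ :: J') c' <+: restrictC (⟨c, w⟩ :: K') c' := fun c' => by
    rw [← restrictC_of_dequeue_eq_some h, ← restrictC_of_dequeue_eq_some hK]
    exact hJK c'
  obtain ⟨rfl, -⟩ : v = w ∧ _ := by simpa using hpre c
  refine ⟨K', hK, fun c' => ?_⟩
  by_cases hc : c = c' <;> simpa [hc] using hpre c'

/-- Program configurations without the output queue: REDUCE empties the local output queues,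
so only this part of a local execution follows the run of the program itself. -/
structure IConf where
  prg : Prog
  mem : Mem
  inq : Queue

inductive IStep : IConf → IConf → Prop
  | assign : IStep ⟨.assign x e, m, I⟩ ⟨.skip, Function.update m x (e.eval m), I⟩
  | seqStep : IStep ⟨p, m, I⟩ ⟨p', m', I'⟩ → IStep ⟨.seq p q, m, I⟩ ⟨.seq p' q, m', I'⟩
  | seqSkip : IStep ⟨.seq .skip q, m, I⟩ ⟨q, m, I⟩
  | iteT : e.eval m = .bool true → IStep ⟨.ite e p q, m, I⟩ ⟨p, m, I⟩
  | iteF : e.eval m = .bool false → IStep ⟨.ite e p q, m, I⟩ ⟨q, m, I⟩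
  | whileT : e.eval m = .bool true → IStep ⟨.while e p, m, I⟩ ⟨.seq p (.while e p), m, I⟩
  | whileF : e.eval m = .bool false → IStep ⟨.while e p, m, I⟩ ⟨.skip, m, I⟩
  | inp : dequeue I c = some (v, I') → IStep ⟨.input x c, m, I⟩ ⟨.skip, Function.update m x v, I'⟩
  | out : IStep ⟨.output e c, m, I⟩ ⟨.skip, m, I⟩

namespace IStep

lemma not_skip {m : Mem} {Q : Queue} {t : IConf} : ¬ IStep ⟨.skip, m, Q⟩ t := nofun

lemma rightUnique : Relator.RightUnique IStep := by
  intro s t t' h h'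
  induction h generalizing t' with
  | seqStep h ih =>
    cases h' with
    | seqStep h' => cases ih h'; rfl
    | seqSkip => exact (not_skip h).elim
  | seqSkip => cases h' with
    | seqStep h' => exact (not_skip h').elim
    | seqSkip => rfl
  | inp hd => cases h' with
    | inp hd' => rw [hd] at hd'; cases hd'; rfl
  | _ => cases h' <;> simp_all

lemma of_pStep {a b : PConf} (h : PStep a b) :
    IStep ⟨a.prg, a.mem, a.inq⟩ ⟨b.prg, b.mem, b.inq⟩ := by
  induction h with
  | seqStep _ ih => exact .seqStep ih
  | _ => constructor <;> assumption

lemma append_inq {s t : IConf} (h : IStep s t) (F : Queue) :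
    IStep ⟨s.prg, s.mem, s.inq ++ F⟩ ⟨t.prg, t.mem, t.inq ++ F⟩ := by
  induction h with
  | seqStep _ ih => exact .seqStep ih
  | inp hd => exact .inp (dequeue_append_of_eq_some hd F)
  | _ => constructor <;> assumption

lemma dequeue_isSome {s t : IConf} (h : IStep s t) {c : Chan}
    (hc : s.prg.headInput.map Prod.snd = some c) : (dequeue s.inq c).isSome := by
  induction h with
  | seqStep _ ih => exact ih hc
  | inp hd => simp_all [Prog.headInput]
  | _ => simp [Prog.headInput] at hc

lemma exists_of_chanPrefix {s t : IConf} (h : IStep s t) {K : Queue} (hK : ChanPrefix s.inq K) :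
    ∃ K', IStep ⟨s.prg, s.mem, K⟩ ⟨t.prg, t.mem, K'⟩ ∧ ChanPrefix t.inq K' := by
  induction h with
  | seqStep _ ih =>
    obtain ⟨K', h, hK'⟩ := ih hK
    exact ⟨K', .seqStep h, hK'⟩
  | inp hd =>
    obtain ⟨K', hd', hK'⟩ := hK.exists_dequeue hd
    exact ⟨K', .inp hd', hK'⟩
  | _ => exact ⟨K, by constructor <;> assumption, hK⟩

lemma reflTransGen_of_chanPrefix {s t : IConf} (h : Relation.ReflTransGen IStep s t) {K : Queue}
    (hK : ChanPrefix s.inq K) :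
    ∃ K', Relation.ReflTransGen IStep ⟨s.prg, s.mem, K⟩ ⟨t.prg, t.mem, K'⟩ ∧
      ChanPrefix t.inq K' := by
  induction h with
  | refl => exact ⟨K, .refl, hK⟩
  | tail _ hst ih =>
    obtain ⟨K', hK', hpre⟩ := ih
    obtain ⟨K'', hK'', hpre'⟩ := hst.exists_of_chanPrefix hpre
    exact ⟨K'', hK'.tail hK'', hpre'⟩

end IStep

def IConf.Halts (s : IConf) : Prop :=
  ∃ m Q, Relation.ReflTransGen IStep s ⟨.skip, m, Q⟩

namespace IConf.Halts

lemma of_bigStep {p : Prog} {I O : Queue} (h : BigStep p I O) : IConf.Halts ⟨p, Mem.init, I⟩ := by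
  obtain ⟨m, hm⟩ := h
  exact ⟨m, [], Relation.ReflTransGen.lift (fun c : PConf => (⟨c.prg, c.mem, c.inq⟩ : IConf))
    (fun _ _ => IStep.of_pStep) _ _ hm⟩

lemma of_reflTransGen {s t : IConf} (hs : s.Halts) (h : Relation.ReflTransGen IStep s t) :
    t.Halts := by
  obtain ⟨m, Q, hz⟩ := hs
  exact ⟨m, Q, h.of_rightUnique_of_stuck IStep.rightUnique (fun _ => IStep.not_skip) hz⟩

lemma of_chanPrefix {p : Prog} {m : Mem} {J K : Queue} (h : IConf.Halts ⟨p, m, J⟩)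
    (hJK : ChanPrefix J K) : IConf.Halts ⟨p, m, K⟩ := by
  obtain ⟨mz, Qz, hz⟩ := h
  obtain ⟨K', hK', -⟩ := IStep.reflTransGen_of_chanPrefix hz hJK
  exact ⟨mz, K', hK'⟩

lemma acc (h : IConf.Halts s) : Acc (flip IStep) s := by
  obtain ⟨m, Q, hz⟩ := h
  exact hz.acc_flip_of_rightUnique IStep.rightUnique fun _ => IStep.not_skip

end IConf.Halts

lemma IStep.exists_lStep {s t : IConf} (h : IStep s t) (O r cs : Queue) :
    ∃ l', LStep ⟨.E, none, s.prg, s.mem, s.inq, O, r, cs⟩ l' := by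
  induction h with
  | seqStep _ ih =>
    obtain ⟨⟨⟩, hl⟩ := ih
    exact ⟨_, .seqStep hl⟩
  | assign => exact ⟨_, .assign⟩
  | seqSkip => exact ⟨_, .seqSkip⟩
  | iteT he => exact ⟨_, .iteT he⟩
  | iteF he => exact ⟨_, .iteF he⟩
  | whileT he => exact ⟨_, .whileT he⟩
  | whileF he => exact ⟨_, .whileF he⟩
  | inp hd => exact ⟨_, .inp1 hd⟩
  | out => exact ⟨_, .out⟩

namespace LocalConf

def erase (l : LocalConf) : IConf := ⟨l.prg, l.mem, l.inq⟩

def BlockedOn (l : LocalConf) (c : Chan) : Prop :=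
  l.prg.headInput.map Prod.snd = some c ∧ dequeue l.inq c = none

lemma BlockedOn.not_iStep {l : LocalConf} {c : Chan} (h : l.BlockedOn c) (t : IConf) :
    ¬ IStep l.erase t :=
  fun ht => by simpa [LocalConf.erase, h.2] using ht.dequeue_isSome h.1

lemma BlockedOn.sendTo_of_ne {l : LocalConf} {c c' : Chan} (h : l.BlockedOn c') (hc : c ≠ c')
    (x : Val) :
    (sendTo l ⟨c, x⟩).BlockedOn c' := by
  refine ⟨h.1, dequeue_eq_none_iff.mpr ?_⟩
  simp [MapReduce.sendTo, dequeue_eq_none_iff.mp h.2, hc]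

lemma BlockedOn.readyOn_sendTo {l : LocalConf} {c : Chan} (h : l.BlockedOn c) (hS : l.stt = .S)
    (x : Val) : readyOn (sendTo l ⟨c, x⟩) c :=
  ⟨by simp [waitChanI, MapReduce.sendTo, hS, h.1], dequeue_append_singleton_isSome l.inq c x⟩

def Status (l : LocalConf) : Prop :=
  match l.stt, l.intr with
  | .E, none => True
  | .E, some _ => False
  -- the high execution asleep until MAP reads, for the low one, the low item it asked for
  | .S, none => ∃ c, l.BlockedOn c
  | .S, some (.inSig c) => l.BlockedOn c
  | .S, some (.outSig c) => (dequeue l.outq c).isSome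

/-- Drops at every scheduling step that leaves `erase` unchanged: going to sleep on a missing
input (2 → 1), MAP dropping the signal of the high execution (1 → 0), REDUCE waking the
writer (3 → 2). -/
def weight (l : LocalConf) : ℕ :=
  match l.stt, l.intr with
  | .E, _ => 2
  | .S, none => 0
  | .S, some (.inSig _) => 1
  | .S, some (.outSig _) => 3

end LocalConf

namespace LStep

variable {l l' : LocalConf}

lemma active (h : LStep l l') : l.stt = .E ∧ l.intr = none := by
  cases h <;> exact ⟨rfl, rfl⟩

lemma received_eq (h : LStep l l') : l'.received = l.received := by
  induction h <;> simp_all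

lemma restrictC_consumed_append_inq (h : LStep l l') (c : Chan) :
    restrictC l'.consumed c ++ restrictC l'.inq c =
      restrictC l.consumed c ++ restrictC l.inq c := by
  induction h with
  | seqStep _ ih => exact ih
  | inp1 hd =>
    simp only [restrictC_of_dequeue_eq_some hd c, restrictC_append, restrictC_cons, restrictC_nil]
    split_ifs <;> simp
  | _ => rfl

lemma erase_or (h : LStep l l') :
    IStep l.erase l'.erase ∨
      l'.erase = l.erase ∧ ∃ c, l'.stt = .S ∧ l'.intr = some (.inSig c) := by
  induction h with
  | seqStep _ ih =>
    rcases ih with ih | ⟨ih, c, hS, hI⟩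
    · exact .inl (.seqStep ih)
    · simp only [LocalConf.erase, IConf.mk.injEq] at ih
      exact .inr ⟨by simp [LocalConf.erase, ih], c, hS, hI⟩
  | inp2 => exact .inr ⟨rfl, _, rfl, rfl⟩
  | _ => exact .inl (by constructor <;> assumption)

lemma status (h : LStep l l') : l'.Status := by
  induction h with
  | seqStep _ ih => simpa [LocalConf.Status, LocalConf.BlockedOn, Prog.headInput] using ih
  | inp2 hd => exact ⟨rfl, hd⟩
  | out => exact dequeue_append_singleton_isSome _ _ _
  | _ => trivial

end LStep

structure LocalInv (p : Prog) (l : LocalConf) : Prop where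
  run : Relation.ReflTransGen IStep ⟨p, Mem.init, l.received⟩ l.erase
  received : ∀ c, restrictC l.received c = restrictC l.consumed c ++ restrictC l.inq c
  status : l.Status

namespace LocalInv

variable {p : Prog} {l : LocalConf}

lemma init (p : Prog) : LocalInv p (LocalConf.init p) :=
  ⟨.refl, fun _ => rfl, trivial⟩

lemma lStep {l' : LocalConf} (hL : LocalInv p l) (h : LStep l l') : LocalInv p l' where
  run := by
    rw [h.received_eq]
    rcases h.erase_or with hs | ⟨hs, -⟩
    · exact hL.run.tail hs
    · exact hs ▸ hL.run
  received c := by rw [h.received_eq, h.restrictC_consumed_append_inq, hL.received]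
  status := h.status

lemma clearInSig {c : Chan} (hL : LocalInv p l) (hI : l.intr = some (.inSig c)) :
    LocalInv p { l with intr := none } := by
  refine ⟨hL.run, hL.received, ?_⟩
  have hs := hL.status
  cases hS : l.stt <;> simp only [LocalConf.Status, hS, hI] at hs
  simpa [LocalConf.Status, hS] using ⟨c, hs⟩

lemma wake (hL : LocalInv p l) (O : Queue) :
    LocalInv p { l with stt := .E, intr := none, outq := O } :=
  ⟨hL.run, hL.received, trivial⟩

lemma deliver (hL : LocalInv p l) (w : Vec) : LocalInv p (wakeReadyOn w.ch (sendTo l w)) := by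
  obtain ⟨c, x⟩ := w
  have hrun : Relation.ReflTransGen IStep ⟨p, Mem.init, (sendTo l ⟨c, x⟩).received⟩
      (sendTo l ⟨c, x⟩).erase :=
    Relation.ReflTransGen.lift (fun s : IConf => (⟨s.prg, s.mem, s.inq ++ [⟨c, x⟩]⟩ : IConf))
      (fun _ _ h => h.append_inq _) _ _ hL.run
  have hrec : ∀ c', restrictC (sendTo l ⟨c, x⟩).received c' =
      restrictC (sendTo l ⟨c, x⟩).consumed c' ++ restrictC (sendTo l ⟨c, x⟩).inq c' := fun c' => by
    simp [sendTo, hL.received c']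
  unfold wakeReadyOn
  split_ifs with hready
  · exact ⟨hrun, hrec, trivial⟩
  refine ⟨hrun, hrec, ?_⟩
  have blocked : ∀ c', l.BlockedOn c' → l.stt = .S → (sendTo l ⟨c, x⟩).BlockedOn c' := by
    intro c' hb hS
    by_cases hc : c = c'
    · subst hc; exact (hready (hb.readyOn_sendTo hS x)).elim
    · exact hb.sendTo_of_ne hc x
  have hs := hL.status
  rcases hS : l.stt with _ | _ <;> rcases hI : l.intr with _ | _ | _ <;>
    simp only [LocalConf.Status, hS, hI, sendTo] at hs ⊢
  · obtain ⟨c', hb⟩ := hs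
    exact ⟨c', blocked c' hb hS⟩
  · exact blocked _ hs hS
  · exact hs

lemma halts {J : Queue} (hL : LocalInv p l) (hJ : IConf.Halts ⟨p, Mem.init, J⟩)
    (hJK : ChanPrefix J l.received) : l.erase.Halts :=
  (hJ.of_chanPrefix hJK).of_reflTransGen hL.run

end LocalInv

def lowView (lvl : Chan → SecLevel) (vdef : Val) (v : Vec) : Vec :=
  ⟨v.ch, if lvl v.ch = .L then v.val else vdef⟩

@[simp] lemma lowView_ch (lvl : Chan → SecLevel) (vdef : Val) (v : Vec) :
    (lowView lvl vdef v).ch = v.ch := rfl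

lemma restrictC_map_lowView (lvl : Chan → SecLevel) (vdef : Val) (Q : Queue) (c : Chan) :
    restrictC (Q.map (lowView lvl vdef)) c = (restrictC Q c).map (lowView lvl vdef) := by
  simp only [restrictC, List.filter_map]
  rfl

lemma chanPrefix_map_lowView {lvl : Chan → SecLevel} {vdef : Val} {I I' : Queue}
    (hlow : lowEq lvl I' I) (hdef : ∀ v ∈ I', lvl v.ch = .H → v.val = vdef)
    (hlen : ∀ c, (restrictC I' c).length ≤ (restrictC I c).length) :
    ChanPrefix I' (I.map (lowView lvl vdef)) := by
  intro c
  rw [restrictC_map_lowView]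
  cases hc : lvl c with
  | L =>
    rw [restrictC_eq_of_restrictL_eq hlow hc, List.map_congr_left fun v hv => ?_, List.map_id]
    obtain ⟨-, rfl⟩ : v ∈ I ∧ v.ch = c := by simpa [restrictC] using hv
    simp [lowView, hc]
  | H =>
    have hI' : restrictC I' c = List.replicate (restrictC I' c).length ⟨c, vdef⟩ :=
      List.eq_replicate_of_mem fun v hv => by
        obtain ⟨hmem, rfl⟩ : v ∈ I' ∧ v.ch = c := by simpa [restrictC] using hv
        rw [← hdef v hmem hc]
    have hI : (restrictC I c).map (lowView lvl vdef) =
        List.replicate (restrictC I c).length ⟨c, vdef⟩ := by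
      refine (List.eq_replicate_of_mem fun v hv => ?_).trans (by rw [List.length_map])
      obtain ⟨w, hw, rfl⟩ := List.mem_map.mp hv
      obtain ⟨-, rfl⟩ : w ∈ I ∧ w.ch = c := by simpa [restrictC] using hw
      simp [lowView, hc]
    rw [hI', hI]
    simp [List.prefix_iff_eq_take, List.take_replicate, hlen c]

@[simp] lemma wakeReadyOn_received (c : Chan) (l : LocalConf) :
    (wakeReadyOn c l).received = l.received := by
  unfold wakeReadyOn; split_ifs <;> rfl

lemma broadcast_pair (lvl : Chan → SecLevel) (vdef : Val) (c : Chan) (v : Val) (a b : LocalConf) :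
    broadcast lvl vdef c v [a, b] =
      [wakeReadyOn c (sendTo a ⟨c, v⟩), wakeReadyOn c (sendTo b (lowView lvl vdef ⟨c, v⟩))] := by
  simp [broadcast, lowView]

def EMInv (p : Prog) (lvl : Chan → SecLevel) (vdef : Val) (I : Queue) (γ : EMConf) : Prop :=
  ∃ l0 l1, γ.locs = [l0, l1] ∧
    (∀ c, restrictC γ.gconsumed c ++ restrictC γ.gin c = restrictC I c) ∧
    l0.received = γ.gconsumed ∧ l1.received = γ.gconsumed.map (lowView lvl vdef) ∧
    LocalInv p l0 ∧ LocalInv p l1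

namespace EMInv

variable {p : Prog} {lvl : Chan → SecLevel} {vdef : Val} {I : Queue} {γ : EMConf}

lemma init : EMInv p lvl vdef I (EMConf.init p I) :=
  ⟨_, _, rfl, fun _ => rfl, rfl, rfl, .init p, .init p⟩

lemma set {γ' : EMConf} {i : ℕ} {l l' : LocalConf} (hInv : EMInv p lvl vdef I γ)
    (hl : γ.locs[i]? = some l) (hset : γ'.locs = γ.locs.set i l') (hgin : γ'.gin = γ.gin)
    (hgc : γ'.gconsumed = γ.gconsumed) (hrec : l'.received = l.received)
    (hL : LocalInv p l → LocalInv p l') : EMInv p lvl vdef I γ' := by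
  obtain ⟨l0, l1, hlocs, hsplit, h0, h1, hL0, hL1⟩ := hInv
  rw [hlocs] at hl hset
  simp only [EMInv, hgin, hgc]
  rcases List.eq_of_getElem?_pair hl with ⟨rfl, rfl⟩ | ⟨rfl, rfl⟩
  · exact ⟨l', l1, hset, hsplit, hrec ▸ h0, h1, hL hL0, hL1⟩
  · exact ⟨l0, l', hset, hsplit, h0, hrec ▸ h1, hL0, hL hL1⟩

lemma step {γ' : EMConf} {a : Agent} (hInv : EMInv p lvl vdef I γ)
    (h : EMStep .RI lvl vdef a γ γ') : EMInv p lvl vdef I γ' := by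
  cases h with
  | locStep hl hstep => exact hInv.set hl rfl rfl rfl hstep.received_eq (·.lStep hstep)
  | mapSkip hl _ hI => exact hInv.set hl rfl rfl rfl rfl (·.clearInSig hI)
  | red hl => exact hInv.set hl rfl rfl rfl rfl (·.wake _)
  | mapDefault _ _ _ h => exact h.elim
  | @mapRead _ i c l v gin' hl _ hI _ hd =>
    obtain ⟨l0, l1, hlocs, hsplit, h0, h1, hL0, hL1⟩ := hInv
    have hsplit' : ∀ c', restrictC (γ.gconsumed ++ [⟨c, v⟩]) c' ++ restrictC gin' c' =
        restrictC I c' := fun c' => by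
      rw [← hsplit c', restrictC_of_dequeue_eq_some hd c']
      simp only [restrictC_append, restrictC_cons, restrictC_nil, List.append_assoc]
      split_ifs <;> rfl
    rw [hlocs] at hl
    rcases List.eq_of_getElem?_pair hl with ⟨rfl, rfl⟩ | ⟨rfl, rfl⟩
    · refine ⟨_, _, ?_, hsplit', ?_, ?_, (hL0.clearInSig hI).deliver ⟨c, v⟩,
        hL1.deliver (lowView lvl vdef ⟨c, v⟩)⟩
      · simp [hlocs, preClone, broadcast_pair]
      · simp [sendTo, h0]
      · simp [sendTo, h1]
    · refine ⟨_, _, ?_, hsplit', ?_, ?_, hL0.deliver ⟨c, v⟩,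
        (hL1.clearInSig hI).deliver (lowView lvl vdef ⟨c, v⟩)⟩
      · simp [hlocs, preClone, broadcast_pair]
      · simp [sendTo, h0]
      · simp [sendTo, h1]

lemma localInv_of_mem (hInv : EMInv p lvl vdef I γ) {l : LocalConf} (hl : l ∈ γ.locs) :
    LocalInv p l := by
  obtain ⟨l0, l1, hlocs, -, -, -, hL0, hL1⟩ := hInv
  rw [hlocs] at hl
  rcases List.mem_pair.mp hl with rfl | rfl
  exacts [hL0, hL1]

lemma consumed_of_consumesAsIn (hInv : EMInv p lvl vdef I γ) (hcons : ConsumesAsIn lvl I γ) :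
    γ.gin = [] ∧ ∀ c, restrictC γ.gconsumed c = restrictC I c := by
  obtain ⟨l0, l1, hlocs, hsplit, h0, -, hL0, -⟩ := hInv
  obtain ⟨-, hL, hH⟩ := hcons
  have hat0 : γ.locAt 0 = l0 := by simp [EMConf.locAt, hlocs]
  rw [hat0] at hL hH
  have key : ∀ c, restrictC γ.gconsumed c = restrictC I c ++ restrictC l0.inq c := fun c => by
    rw [← h0, hL0.received c]
    cases hc : lvl c
    · rw [restrictC_eq_of_restrictL_eq hH hc]
    · rw [restrictC_eq_of_restrictL_eq hL hc]
  have hgin : ∀ c, restrictC γ.gin c = [] := fun c => by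
    have := congrArg List.length (hsplit c)
    simp only [key, List.length_append] at this
    exact List.eq_nil_of_length_eq_zero (by omega)
  refine ⟨eq_nil_of_forall_restrictC_eq_nil hgin, fun c => ?_⟩
  simpa [hgin c] using hsplit c

lemma halts_of_consumesAsIn {O : Queue} (hsec : RI lvl p) (hrun : BigStep p I O)
    (hInv : EMInv p lvl vdef I γ) (hcons : ConsumesAsIn lvl I γ) :
    ∀ l ∈ γ.locs, l.erase.Halts := by
  obtain ⟨-, hgc⟩ := hInv.consumed_of_consumesAsIn hcons
  obtain ⟨l0, l1, hlocs, -, h0, h1, hL0, hL1⟩ := hInv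
  obtain ⟨I', O', hlow, hdef, hlen, hrun', -⟩ := hsec vdef I O hrun
  have hhigh : l0.erase.Halts :=
    hL0.halts (.of_bigStep hrun) fun c => by rw [h0, hgc c]
  have hlow : l1.erase.Halts := by
    refine hL1.halts (.of_bigStep hrun') fun c => ?_
    rw [h1, restrictC_map_lowView, hgc c, ← restrictC_map_lowView]
    exact chanPrefix_map_lowView hlow hdef hlen c
  rw [hlocs]
  simp [hhigh, hlow]

end EMInv

lemma EMReach.emInv {p : Prog} {lvl : Chan → SecLevel} {vdef : Val} {I : Queue} {γ : EMConf}
    (h : EMReach Mech.RI lvl vdef p I γ) : EMInv p lvl vdef I γ := by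
  induction h with
  | refl => exact .init
  | tail _ hstep ih => exact ih.step hstep.choose_spec

def LocalProgress : LocalConf → LocalConf → Prop :=
  InvImage (Prod.Lex (flip IStep) (· < ·)) fun l => (l.erase, l.weight)

namespace LocalProgress

variable {l l' : LocalConf}

lemma of_iStep (h : IStep l.erase l'.erase) : LocalProgress l' l :=
  Prod.Lex.left _ _ h

lemma of_weight_lt (he : l'.erase = l.erase) (hw : l'.weight < l.weight) : LocalProgress l' l := by
  show Prod.Lex _ _ (l'.erase, l'.weight) (l.erase, l.weight)
  rw [he]
  exact Prod.Lex.right _ hw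

lemma of_lStep (h : LStep l l') : LocalProgress l' l := by
  rcases h.erase_or with hs | ⟨he, c, hS, hI⟩
  · exact of_iStep hs
  · refine of_weight_lt he ?_
    simp [LocalConf.weight, h.active.1, hS, hI]

lemma acc (h : l.erase.Halts) : Acc LocalProgress l :=
  InvImage.accessible _ (Prod.lexAccessible h.acc (fun _ => wellFounded_lt.apply _) _)

end LocalProgress

lemma gameAdd_of_set {r : LocalConf → LocalConf → Prop} {γ γ' : EMConf} {l0 l1 l l' : LocalConf}
    {i : ℕ} (hlocs : γ.locs = [l0, l1]) (hl : γ.locs[i]? = some l)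
    (hset : γ'.locs = γ.locs.set i l') (h : r l' l) :
    Prod.GameAdd r r (γ'.locAt 0, γ'.locAt 1) (γ.locAt 0, γ.locAt 1) := by
  rw [hlocs] at hl hset
  rcases List.eq_of_getElem?_pair hl with ⟨rfl, rfl⟩ | ⟨rfl, rfl⟩
  · simpa [EMConf.locAt, hlocs, hset] using Prod.GameAdd.fst h
  · simpa [EMConf.locAt, hlocs, hset] using Prod.GameAdd.snd h

/-- With the global input queue empty MAP cannot read, so no step touches both executions. -/
lemma gameAdd_of_emStep {lvl : Chan → SecLevel} {vdef : Val} {γ γ' : EMConf} {a : Agent}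
    {l0 l1 : LocalConf} (hlocs : γ.locs = [l0, l1]) (hgin : γ.gin = [])
    (h : EMStep .RI lvl vdef a γ γ') :
    Prod.GameAdd LocalProgress LocalProgress (γ'.locAt 0, γ'.locAt 1) (γ.locAt 0, γ.locAt 1) := by
  cases h with
  | locStep hl hstep => exact gameAdd_of_set hlocs hl rfl (.of_lStep hstep)
  | mapSkip hl hS hI =>
    exact gameAdd_of_set hlocs hl rfl (.of_weight_lt rfl (by simp [LocalConf.weight, hS, hI]))
  | red hl hS hI =>
    exact gameAdd_of_set hlocs hl rfl (.of_weight_lt rfl (by simp [LocalConf.weight, hS, hI]))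
  | mapRead _ _ _ _ hd => simp [hgin, dequeue] at hd
  | mapDefault _ _ _ h => exact h.elim

lemma prg_eq_skip_of_emStuck {p : Prog} {lvl : Chan → SecLevel} {vdef : Val} {γ : EMConf}
    {i : ℕ} {l : LocalConf} (hstuck : EMStuck .RI lvl vdef γ) (hl : γ.locs[i]? = some l)
    (hL : LocalInv p l) (hh : l.erase.Halts) : l.prg = .skip := by
  obtain ⟨m, Q, hz⟩ := hh
  rcases hz.cases_head with he | ⟨t, ht, -⟩
  · exact congrArg IConf.prg he
  have hs := hL.status
  rcases hS : l.stt with _ | _ <;> rcases hI : l.intr with _ | c | c <;>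
    simp only [LocalConf.Status, hS, hI] at hs
  · obtain ⟨l', hl'⟩ : ∃ l', LStep l l' := by
      obtain ⟨⟩ := l
      simp only at hS hI
      subst hS hI
      exact ht.exists_lStep _ _ _
    exact (hstuck _ _ (.locStep hl hl')).elim
  · obtain ⟨c, hb⟩ := hs
    exact (hb.not_iStep t ht).elim
  · exact (hs.not_iStep t ht).elim
  · obtain ⟨⟨v, O⟩, hd⟩ := Option.isSome_iff_exists.mp hs
    exact (hstuck _ _ (.red hl hS hI hd)).elim

section RunningLemma

variable {p : Prog} {lvl : Chan → SecLevel} {vdef : Val} {I O : Queue}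

lemma not_exists_run_eventually_consumesAsIn (hsec : RI lvl p) (hrun : BigStep p I O) :
    ¬ ∃ f : ℕ → EMConf, f 0 = EMConf.init p I ∧
      (∀ n, EMStepRel Mech.RI lvl vdef (f n) (f (n + 1))) ∧
      ∃ N, ∀ n, N ≤ n → ConsumesAsIn lvl I (f n) := by
  rintro ⟨f, hf0, hstep, N, hN⟩
  have hInv : ∀ n, EMInv p lvl vdef I (f n) := fun n => by
    induction n with
    | zero => exact hf0 ▸ .init
    | succ n ih => exact ih.step (hstep n).choose_spec
  have hacc : Acc (Prod.GameAdd LocalProgress LocalProgress) ((f N).locAt 0, (f N).locAt 1) := by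
    obtain ⟨l0, l1, hlocs, -⟩ := hInv N
    have hhalts := (hInv N).halts_of_consumesAsIn hsec hrun (hN N le_rfl)
    exact .prod_gameAdd (LocalProgress.acc (hhalts _ (by simp [EMConf.locAt, hlocs])))
      (LocalProgress.acc (hhalts _ (by simp [EMConf.locAt, hlocs])))
  refine hacc.not_exists_descending
    ⟨fun n => ((f (N + n)).locAt 0, (f (N + n)).locAt 1), rfl, fun n => ?_⟩
  obtain ⟨l0, l1, hlocs, -⟩ := hInv (N + n)
  exact gameAdd_of_emStep hlocs
    ((hInv _).consumed_of_consumesAsIn (hN _ (Nat.le_add_right N n))).1 (hstep _).choose_spec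

lemma EMStuck.terminal_of_consumesAsIn {γ : EMConf} (hsec : RI lvl p) (hrun : BigStep p I O)
    (hreach : EMReach Mech.RI lvl vdef p I γ) (hstuck : EMStuck Mech.RI lvl vdef γ)
    (hcons : ConsumesAsIn lvl I γ) :
    γ.Terminal ∧ ∀ c, restrictC γ.gconsumed c = restrictC I c := by
  have hInv := hreach.emInv
  obtain ⟨hgin, hgc⟩ := hInv.consumed_of_consumesAsIn hcons
  refine ⟨⟨fun l hl => ?_, hgin⟩, hgc⟩
  obtain ⟨i, hi⟩ := List.mem_iff_getElem?.mp hl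
  exact prg_eq_skip_of_emStuck hstuck hi (hInv.localInv_of_mem hl)
    (hInv.halts_of_consumesAsIn hsec hrun hcons l hl)

end RunningLemma

/-- **Running lemma for RI (Lemma 2).**  Let π satisfy removal of inputs with
π(I) ⇓ O.  In the enforcement mechanism for removal of inputs, regardless of
the order in which the local executions are scheduled, if the low execution
consumes the same low input items as in I and the high execution consumes the
high and low input items as in I, then the execution of the enforcement
mechanism terminates, and the input queue I* it consumes satisfies
I*|_c = I|_c for every input channel c. -/
theorem running_lemma_RI (lvl : Chan → SecLevel) (vdef : Val) (p : Prog)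
    (I O : Queue) (hsec : RI lvl p) (hrun : BigStep p I O) :
    (¬ ∃ f : ℕ → EMConf, f 0 = EMConf.init p I ∧
        (∀ n, EMStepRel Mech.RI lvl vdef (f n) (f (n + 1))) ∧
        ∃ N, ∀ n, N ≤ n → ConsumesAsIn lvl I (f n)) ∧
    ∀ γ, EMReach Mech.RI lvl vdef p I γ → EMStuck Mech.RI lvl vdef γ →
      ConsumesAsIn lvl I γ →
      γ.Terminal ∧ ∀ c, restrictC γ.gconsumed c = restrictC I c :=
  ⟨not_exists_run_eventually_consumesAsIn hsec hrun,
    fun _ hreach hstuck hcons => hstuck.terminal_of_consumesAsIn hsec hrun hreach hcons⟩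

end MapReduce
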